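/- For every nondeterministic finite automaton N on finite words with n states recognizing a language R ⊆ Σ*, there exists a semantically deterministic transition-based nondeterministic Büchi automaton A with exactly n states such that L(A) = ∞R, the set of infinite words containing infinitely many disjoint infixes in R. -/
import Mathlib


open Filter

variable {A Q : Type}

/-- Extension of a transition function to sets of states and finite words. -/
def extSet (δ : Q → A → Set Q) : Set Q → List A → Set Q
  | S, [] => S
  | S, a :: u => extSet δ (⋃ q ∈ S, δ q a) u

/-- A nondeterministic automaton on finite words (NFW), with a total
transition function. -/
structure NFW (A Q : Type) where
  init : Set Q
  δ : Q → A → Set Q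
  F : Set Q
  init_nonempty : init.Nonempty
  δ_nonempty : ∀ q a, (δ q a).Nonempty

/-- The language of finite words recognized by an NFW. -/
def NFW.Lang (N : NFW A Q) : Set (List A) :=
  {u | ∃ q ∈ extSet N.δ N.init u, q ∈ N.F}

/-- A transition-based nondeterministic Büchi automaton (tNBW). -/
structure tNBW (A Q : Type) where
  init : Set Q
  δ : Q → A → Set Q
  α : Set (Q × A × Q)
  init_nonempty : init.Nonempty
  δ_nonempty : ∀ q a, (δ q a).Nonempty

namespace tNBW

/-- `L(A^q)`: words having a run from `q` traversing `α`-transitions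
infinitely often. -/
def LangFrom (M : tNBW A Q) (q : Q) : Set (ℕ → A) :=
  {w | ∃ r : ℕ → Q, r 0 = q ∧ (∀ i, r (i + 1) ∈ M.δ (r i) (w i)) ∧
    ∃ᶠ i in atTop, (r i, w i, r (i + 1)) ∈ M.α}

def Lang (M : tNBW A Q) : Set (ℕ → A) :=
  {w | ∃ q ∈ M.init, w ∈ M.LangFrom q}

/-- Semantic determinism. -/
def SD (M : tNBW A Q) : Prop :=
  (∀ q₁ ∈ M.init, ∀ q₂ ∈ M.init, M.LangFrom q₁ = M.LangFrom q₂) ∧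
  ∀ q a, ∀ q₁ ∈ M.δ q a, ∀ q₂ ∈ M.δ q a, M.LangFrom q₁ = M.LangFrom q₂

end tNBW

/-- The infix `w[i..i+len-1]` of an infinite word. -/
def seg (w : ℕ → A) (i len : ℕ) : List A := List.ofFn fun k : Fin len => w (i + k)

/-- `∞R`: the words containing infinitely many disjoint infixes in `R`
(equivalently, `ε ∈ R`, or for every position there is an infix in `R`
starting beyond it). -/
def InfInfix (R : Set (List A)) : Set (ℕ → A) :=
  {w | ∀ N, ∃ i len, N ≤ i ∧ seg w i len ∈ R}

/-! ### Auxiliary material -/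

lemma seg_zero (w : ℕ → A) (i : ℕ) : seg w i 0 = [] := rfl

lemma seg_succ (w : ℕ → A) (i len : ℕ) :
    seg w i (len + 1) = w i :: seg w (i + 1) len := by
  have h : (fun k : Fin len => w (i + ((k.succ : Fin (len + 1)) : ℕ))) =
      fun k : Fin len => w ((i + 1) + (k : ℕ)) := by
    funext k
    congr 1
    simp only [Fin.val_succ]
    omega
  show List.ofFn (fun k : Fin (len + 1) => w (i + (k : ℕ))) =
    w i :: List.ofFn (fun k : Fin len => w ((i + 1) + (k : ℕ)))
  simp only [List.ofFn_succ]
  rw [h]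
  norm_num

/-- A run segment witnesses membership in `extSet`. -/
lemma ext_intro (δ : Q → A → Set Q) (w : ℕ → A) (c : ℕ → Q) :
    ∀ (len i : ℕ) (S : Set Q), c i ∈ S →
      (∀ k, i ≤ k → k < i + len → c (k + 1) ∈ δ (c k) (w k)) →
      c (i + len) ∈ extSet δ S (seg w i len)
  | 0, i, S, hS, _ => by simpa [seg_zero, extSet] using hS
  | len + 1, i, S, hS, hstep => by
    rw [seg_succ]
    show c (i + (len + 1)) ∈ extSet δ (⋃ q ∈ S, δ q (w i)) (seg w (i + 1) len)
    have he : i + (len + 1) = (i + 1) + len := by omega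
    rw [he]
    exact ext_intro δ w c len (i + 1) _
      (Set.mem_biUnion hS (hstep i le_rfl (by omega)))
      (fun k hk hk2 => hstep k (by omega) (by omega))

/-- Membership in `extSet` yields a run segment. -/
lemma ext_elim (δ : Q → A → Set Q) (w : ℕ → A) :
    ∀ (len i : ℕ) (S : Set Q) (p : Q), p ∈ extSet δ S (seg w i len) →
      ∃ c : ℕ → Q, c i ∈ S ∧ (∀ k, i ≤ k → k < i + len → c (k + 1) ∈ δ (c k) (w k)) ∧
        c (i + len) = p
  | 0, i, S, p, hp =>
    ⟨fun _ => p, by simpa [seg_zero, extSet] using hp,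
      fun k h1 h2 => absurd h2 (by omega), rfl⟩
  | len + 1, i, S, p, hp => by
    rw [seg_succ] at hp
    have hp' : p ∈ extSet δ (⋃ q ∈ S, δ q (w i)) (seg w (i + 1) len) := hp
    obtain ⟨c, hc1, hc2, hc3⟩ := ext_elim δ w len (i + 1) _ p hp'
    obtain ⟨q0, hq0S, hq0⟩ := Set.mem_iUnion₂.mp hc1
    refine ⟨fun k => if k ≤ i then q0 else c k, by simp [hq0S], ?_, ?_⟩
    · intro k hk1 hk2
      rcases eq_or_lt_of_le hk1 with heq | hlt
      · rw [← heq]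
        simp only [if_pos le_rfl, if_neg (show ¬ i + 1 ≤ i by omega)]
        exact hq0
      · have h1 : ¬ k ≤ i := by omega
        have h2 : ¬ k + 1 ≤ i := by omega
        simp only [h1, h2, if_false]
        exact hc2 k (by omega) (by omega)
    · have h1 : ¬ i + (len + 1) ≤ i := by omega
      simp only [h1, if_false]
      rw [show i + (len + 1) = (i + 1) + len by omega]
      exact hc3

/-- The function following `g` from state `q` starting at time `n`. -/
def follow (g : ℕ → Q → Q) (q : Q) (n : ℕ) : ℕ → Q
  | 0 => q
  | m + 1 => if m < n then q else g m (follow g q n m)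

lemma follow_eq_self (g : ℕ → Q → Q) (q : Q) {n m : ℕ} (h : m ≤ n) :
    follow g q n m = q := by
  cases m with
  | zero => rfl
  | succ m => simp [follow, Nat.lt_of_succ_le h]

lemma follow_succ (g : ℕ → Q → Q) (q : Q) {n m : ℕ} (h : n ≤ m) :
    follow g q n (m + 1) = g m (follow g q n m) := by
  simp [follow, Nat.not_lt.mpr h]

/-- Gluing infinitely many finite runs into an accepting run. -/
lemma tNBW.langFrom_of_step (M : tNBW A Q) (w : ℕ → A) (q : Q)
    (step : ∀ p n, ∃ m, n ≤ m ∧ ∃ f : ℕ → Q, f n = p ∧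
      (∀ k, n ≤ k → f (k + 1) ∈ M.δ (f k) (w k)) ∧ (f m, w m, f (m + 1)) ∈ M.α) :
    w ∈ M.LangFrom q := by
  classical
  choose m hm f hf0 hfstep hfacc using step
  let sq : ℕ → ℕ × Q := fun k =>
    Nat.rec (0, q) (fun _ p => (m p.2 p.1 + 1, f p.2 p.1 (m p.2 p.1 + 1))) k
  set t : ℕ → ℕ := fun k => (sq k).1 with ht
  set s : ℕ → Q := fun k => (sq k).2 with hs
  have ht0 : t 0 = 0 := rfl
  have hs0 : s 0 = q := rfl
  have htk : ∀ k, t (k + 1) = m (s k) (t k) + 1 := fun k => rfl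
  have hsk : ∀ k, s (k + 1) = f (s k) (t k) (t (k + 1)) := fun k => by
    show f (s k) (t k) (m (s k) (t k) + 1) = _
    rw [htk]
  have htmono : StrictMono t := strictMono_nat_of_lt_succ (fun k => by
    have := hm (s k) (t k); rw [htk]; omega)
  have htge : ∀ k, k ≤ t k := fun k => htmono.le_apply
  have hex : ∀ ν : ℕ, ∃ k, ν < t (k + 1) :=
    fun ν => ⟨ν, lt_of_lt_of_le (Nat.lt_succ_self ν) (htge (ν + 1))⟩
  set K : ℕ → ℕ := fun ν => Nat.find (hex ν) with hKdef
  have hK2 : ∀ ν, ν < t (K ν + 1) := fun ν => Nat.find_spec (hex ν)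
  have hK1 : ∀ ν, t (K ν) ≤ ν := by
    intro ν
    rcases Nat.eq_zero_or_pos (K ν) with h | h
    · rw [h, ht0]; omega
    · have h2 : ¬ ν < t (K ν - 1 + 1) :=
        Nat.find_min (hex ν) (show K ν - 1 < Nat.find (hex ν) by
          have hfk : Nat.find (hex ν) = K ν := rfl
          omega)
      rw [show K ν - 1 + 1 = K ν by omega] at h2
      omega
  have hKspec : ∀ ν k, t k ≤ ν → ν < t (k + 1) → K ν = k := by
    intro ν k h1 h2
    have hle : K ν ≤ k := Nat.find_min' (hex ν) h2
    rcases lt_or_eq_of_le hle with h | h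
    · have h3 : t (K ν + 1) ≤ t k := htmono.monotone (show K ν + 1 ≤ k by omega)
      have := hK2 ν
      omega
    · exact h
  set r : ℕ → Q := fun ν => f (s (K ν)) (t (K ν)) ν with hr
  have hnext : ∀ ν, r (ν + 1) = f (s (K ν)) (t (K ν)) (ν + 1) := by
    intro ν
    rcases lt_or_eq_of_le (Nat.succ_le_of_lt (hK2 ν)) with h | h
    · have hKeq : K (ν + 1) = K ν :=
        hKspec (ν + 1) (K ν) (le_trans (hK1 ν) (Nat.le_succ ν)) h
      simp only [hr, hKeq]
    · have h' : ν + 1 = t (K ν + 1) := h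
      have hlt : ν + 1 < t (K ν + 1 + 1) := by
        rw [h']; exact htmono (show K ν + 1 < K ν + 1 + 1 by omega)
      have hKeq : K (ν + 1) = K ν + 1 := hKspec _ _ (le_of_eq h'.symm) hlt
      show f (s (K (ν + 1))) (t (K (ν + 1))) (ν + 1) = _
      rw [hKeq, h']
      all_goals exact (hf0 _ _).trans (hsk (K ν))
  refine ⟨r, ?_, ?_, ?_⟩
  · have hK0 : K 0 = 0 := by
      apply hKspec 0 0 (le_of_eq ht0)
      have h1 : t 0 < t (0 + 1) := htmono (Nat.lt_succ_self 0)
      omega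
    show f (s (K 0)) (t (K 0)) 0 = q
    rw [hK0, ht0, hs0, hf0]
  · intro ν
    rw [hnext ν]
    exact hfstep (s (K ν)) (t (K ν)) ν (hK1 ν)
  · rw [Filter.frequently_atTop]
    intro B
    have hKm : K (m (s B) (t B)) = B := by
      apply hKspec _ B (hm _ _)
      rw [htk]; omega
    refine ⟨m (s B) (t B), le_trans (htge B) (hm _ _), ?_⟩
    rw [hnext]
    show (f (s (K (m (s B) (t B)))) (t (K (m (s B) (t B)))) _, _, _) ∈ M.α
    rw [hKm]
    exact hfacc (s B) (t B)

/-- The set of states reachable from some initial state of `N` in one step. -/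
def Eset (N : NFW A Q) (a : A) : Set Q := ⋃ q0 ∈ N.init, N.δ q0 a

lemma Eset_nonempty (N : NFW A Q) (a : A) : (Eset N a).Nonempty := by
  obtain ⟨q0, hq0⟩ := N.init_nonempty
  obtain ⟨p, hp⟩ := N.δ_nonempty q0 a
  exact ⟨p, Set.mem_biUnion hq0 hp⟩

/-- The semantically deterministic tNBW built from `N`. -/
def sdM (N : NFW A Q) : tNBW A Q where
  init := N.init
  δ := fun q a => N.δ q a ∪ Eset N a
  α := {tr | tr.2.2 ∈ Eset N tr.2.1 ∧ (tr.1 ∈ N.F ∨ [] ∈ N.Lang)}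
  init_nonempty := N.init_nonempty
  δ_nonempty := fun q a => (N.δ_nonempty q a).mono Set.subset_union_left

lemma sdM_langFrom (N : NFW A Q) (q : Q) :
    (sdM N).LangFrom q = InfInfix N.Lang := by
  classical
  ext w
  constructor
  · rintro ⟨r, hr0, hstep, hfreq⟩ B
    rw [Filter.frequently_atTop] at hfreq
    obtain ⟨j1, hj1B, hacc1⟩ := hfreq B
    obtain ⟨j2, hj12, hacc2⟩ := hfreq (j1 + 1)
    by_cases hε : [] ∈ N.Lang
    · exact ⟨B, 0, le_rfl, by rw [seg_zero]; exact hε⟩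
    · have hP1 : r (j1 + 1) ∈ Eset N (w j1) := hacc1.1
      have hF2 : r j2 ∈ N.F := hacc2.2.resolve_right hε
      set P : ℕ → Prop := fun k => r (k + 1) ∈ Eset N (w k) with hPdef
      set i : ℕ := Nat.findGreatest P (j2 - 1) with hidef
      have hj1i : j1 ≤ i := Nat.le_findGreatest (by omega) hP1
      have hij2 : i ≤ j2 - 1 := Nat.findGreatest_le _
      have hPi : P i := Nat.findGreatest_spec (P := P) (by omega : j1 ≤ j2 - 1) hP1
      have hmax : ∀ k, i < k → k < j2 → r (k + 1) ∈ N.δ (r k) (w k) := by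
        intro k hik hkj2
        have hnP : ¬ P k := Nat.findGreatest_is_greatest hik (by omega)
        rcases hstep k with h | h
        · exact h
        · exact absurd h hnP
      have hmem : r ((i + 1) + (j2 - (i + 1))) ∈
          extSet N.δ (Eset N (w i)) (seg w (i + 1) (j2 - (i + 1))) :=
        ext_intro N.δ w r _ (i + 1) _ hPi
          (fun k hk1 hk2 => hmax k (by omega) (by omega))
      rw [show (i + 1) + (j2 - (i + 1)) = j2 by omega] at hmem
      refine ⟨i, j2 - i, by omega, ?_⟩
      rw [show j2 - i = (j2 - (i + 1)) + 1 by omega, seg_succ]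
      exact ⟨r j2, hmem, hF2⟩
  · intro hw
    apply tNBW.langFrom_of_step
    intro p n
    obtain ⟨i, len, hni, hseg⟩ := hw n
    have heSel : ∀ a, (Eset N a).Nonempty := Eset_nonempty N
    set eSel : A → Q := fun a => (heSel a).choose with heSeldef
    have heSelmem : ∀ a, eSel a ∈ Eset N a := fun a => (heSel a).choose_spec
    cases len with
    | zero =>
      have hε : [] ∈ N.Lang := hseg
      refine ⟨n, le_rfl, follow (fun k _ => eSel (w k)) p n,
        follow_eq_self _ _ le_rfl, ?_, ?_⟩
      · intro k hk
        rw [follow_succ _ _ hk]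
        exact Or.inr (heSelmem (w k))
      · rw [follow_succ _ _ le_rfl]
        exact ⟨heSelmem (w n), Or.inr hε⟩
    | succ len =>
      obtain ⟨pf, hpf, hpfF⟩ := hseg
      obtain ⟨c, hcinit, hcstep, hcend⟩ := ext_elim N.δ w (len + 1) i _ pf hpf
      set g : ℕ → Q → Q := fun k _ =>
        if i ≤ k ∧ k < i + (len + 1) then c (k + 1) else eSel (w k) with hgdef
      set f : ℕ → Q := follow g p n with hfdef
      have hfc : ∀ k, i + 1 ≤ k → k ≤ i + (len + 1) → f k = c k := by
        intro k
        induction k with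
        | zero => omega
        | succ k ih =>
          intro hk1 hk2
          rw [hfdef, follow_succ _ _ (by omega)]
          show (if i ≤ k ∧ k < i + (len + 1) then c (k + 1) else eSel (w k)) = c (k + 1)
          rw [if_pos ⟨by omega, by omega⟩]
      refine ⟨i + (len + 1), by omega, f, follow_eq_self _ _ le_rfl, ?_, ?_⟩
      · intro k hk
        rw [hfdef, follow_succ _ _ hk]
        show (if i ≤ k ∧ k < i + (len + 1) then c (k + 1) else eSel (w k)) ∈ _
        by_cases hcond : i ≤ k ∧ k < i + (len + 1)
        · rw [if_pos hcond]
          rcases eq_or_lt_of_le hcond.1 with heq | hlt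
          · rw [← heq]
            exact Or.inr (Set.mem_biUnion hcinit (hcstep i le_rfl (by omega)))
          · have hfk : follow g p n k = c k := hfc k (by omega) (by omega)
            rw [← hfdef] at *
            rw [hfk]
            exact Or.inl (hcstep k (by omega) (by omega))
        · rw [if_neg hcond]
          exact Or.inr (heSelmem (w k))
      · have hfm : f (i + (len + 1)) = pf := by
          rw [hfc _ (by omega) le_rfl, hcend]
        have hfm1 : f (i + (len + 1) + 1) = eSel (w (i + (len + 1))) := by
          rw [hfdef, follow_succ _ _ (by omega)]
          show (if i ≤ i + (len + 1) ∧ i + (len + 1) < i + (len + 1) then _ else _) = _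
          rw [if_neg (by omega)]
        rw [hfm, hfm1]
        exact ⟨heSelmem _, Or.inl hpfF⟩

/-- Every NFW `N` can be turned into a semantically deterministic tNBW with the
same set of states recognizing `∞ L(N)`. -/
theorem nfw_to_sd_tnbw [Fintype Q] (N : NFW A Q) :
    ∃ M : tNBW A Q, M.SD ∧ M.Lang = InfInfix N.Lang := by
  refine ⟨sdM N, ⟨?_, ?_⟩, ?_⟩
  · intro q₁ _ q₂ _
    rw [sdM_langFrom, sdM_langFrom]
  · intro q a q₁ _ q₂ _
    rw [sdM_langFrom, sdM_langFrom]
  · ext w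
    constructor
    · rintro ⟨q, _, hq⟩
      rwa [sdM_langFrom] at hq
    · intro hw
      obtain ⟨q0, hq0⟩ := N.init_nonempty
      exact ⟨q0, hq0, by rwa [sdM_langFrom]⟩
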